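/- arXiv:1006.0639 — 6 statements merged into one kernel-verified Lean document; each statement's English description precedes it below -/
import Mathlib

section
/- Let P and Q be orthogonal projections on a complex Hilbert space H and set W = I − P − Q. Then W(P − Q) = −(P − Q)W, and for every real number λ with λ ≠ 1 and λ ≠ −1, the operator W maps the kernel of P − Q − λI bijectively onto the kernel of P − Q + λI; in particular dim Ker(P − Q − λI) = dim Ker(P − Q + λI). -/
/-!
With `A = P - Q`, idempotency of `P` and `Q` gives `W A = -A W` and `W² + A² = 1`. The first
identity makes `W` swap the `λ`- and `-λ`-eigenspaces of `A`; the second makes `W²` act on both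
as multiplication by `1 - λ²`, which is invertible for `λ ≠ ±1`, so `(1 - λ²)⁻¹ W` is an inverse.
-/

open Set

section Idempotent

variable {R : Type*} [Ring R] {p q : R}

theorem IsIdempotentElem.one_sub_sub_mul_sub (hp : IsIdempotentElem p) (hq : IsIdempotentElem q) :
    (1 - p - q) * (p - q) = -((p - q) * (1 - p - q)) := calc
  (1 - p - q) * (p - q) = (p - p * p) + (p * q - q * p) - (q - q * q) := by noncomm_ring
  _ = -((p - p * p) + (q * p - p * q) - (q - q * q)) := by rw [hp.eq, hq.eq]; abel
  _ = -((p - q) * (1 - p - q)) := by noncomm_ring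

theorem IsIdempotentElem.one_sub_sub_mul_self_add_sub_mul_self (hp : IsIdempotentElem p)
    (hq : IsIdempotentElem q) : (1 - p - q) * (1 - p - q) + (p - q) * (p - q) = 1 := calc
  _ = 1 - 2 * (p - p * p) - 2 * (q - q * q) := by noncomm_ring
  _ = 1 := by rw [hp.eq, hq.eq]; noncomm_ring

end Idempotent

universe v

theorem Submodule.rank_eq_of_bijOn {R : Type*} {M N : Type v} [Ring R] [AddCommGroup M]
    [Module R M] [AddCommGroup N] [Module R N] {f : M →ₗ[R] N} {p : Submodule R M}
    {q : Submodule R N} (h : BijOn f p q) : Module.rank R p = Module.rank R q :=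
  (LinearEquiv.ofBijective (f.restrict h.mapsTo) h.bijective).rank_eq

namespace Module.End

variable {K V : Type*} [Field K] [AddCommGroup V] [Module K V] {f g : End K V}

theorem mapsTo_eigenspace_neg_of_mul_eq_neg_mul (h : g * f = -(f * g)) (c : K) :
    MapsTo g (f.eigenspace c) (f.eigenspace (-c)) := by
  intro x hx
  rw [SetLike.mem_coe, mem_eigenspace_iff] at hx ⊢
  have hgf : g (f x) = -(f (g x)) := by
    simpa only [mul_apply, LinearMap.neg_apply] using congr($h x)
  rw [← neg_neg (f (g x)), ← hgf, hx, map_smul, neg_smul]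

theorem apply_apply_of_mem_eigenspace (h : g * g + f * f = 1) {c : K} {x : V}
    (hx : x ∈ f.eigenspace c) : g (g x) = (1 - c ^ 2) • x := by
  rw [mem_eigenspace_iff] at hx
  have hsum : g (g x) + c ^ 2 • x = x := by
    simpa only [LinearMap.add_apply, mul_apply, one_apply, hx, map_smul, smul_smul, sq]
      using congr($h x)
  rw [eq_sub_of_add_eq hsum, sub_smul, one_smul]

theorem bijOn_eigenspace_neg (hanti : g * f = -(f * g)) (hsq : g * g + f * f = 1) {c : K}
    (hc : c ^ 2 ≠ 1) : BijOn g (f.eigenspace c) (f.eigenspace (-c)) := by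
  have hc' : 1 - c ^ 2 ≠ 0 := sub_ne_zero.mpr hc.symm
  have hinv : InvOn (fun y ↦ (1 - c ^ 2)⁻¹ • g y) g (f.eigenspace c) (f.eigenspace (-c)) :=
    ⟨fun x hx ↦ by simp [apply_apply_of_mem_eigenspace hsq hx, smul_smul, hc'],
      fun x hx ↦ by simp [apply_apply_of_mem_eigenspace hsq hx, smul_smul, hc']⟩
  have hback : MapsTo g (f.eigenspace (-c)) (f.eigenspace c) := by
    simpa only [neg_neg] using mapsTo_eigenspace_neg_of_mul_eq_neg_mul hanti (-c)
  exact hinv.bijOn (mapsTo_eigenspace_neg_of_mul_eq_neg_mul hanti c)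
    fun y hy ↦ (f.eigenspace c).smul_mem _ (hback hy)

end Module.End

theorem anticommutation_and_kernel_symmetry_general
    {H : Type*} [NormedAddCommGroup H] [InnerProductSpace ℂ H]
    (P Q : H →L[ℂ] H)
    (hP : P * P = P)
    (hQ : Q * Q = Q)
    (W : H →L[ℂ] H) (hW : W = 1 - P - Q) :
    W * (P - Q) = -((P - Q) * W) ∧
    ∀ l : ℝ, l ≠ 1 → l ≠ -1 →
      (Set.BijOn W
        (LinearMap.ker ((P - Q - (l : ℂ) • 1 : H →L[ℂ] H) : H →ₗ[ℂ] H) : Set H)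
        (LinearMap.ker ((P - Q + (l : ℂ) • 1 : H →L[ℂ] H) : H →ₗ[ℂ] H) : Set H)) ∧
      Module.rank ℂ (LinearMap.ker ((P - Q - (l : ℂ) • 1 : H →L[ℂ] H) : H →ₗ[ℂ] H)) =
        Module.rank ℂ (LinearMap.ker ((P - Q + (l : ℂ) • 1 : H →L[ℂ] H) : H →ₗ[ℂ] H)) := by
  subst hW
  have hanti := IsIdempotentElem.one_sub_sub_mul_sub hP hQ
  have hsq := IsIdempotentElem.one_sub_sub_mul_self_add_sub_mul_self hP hQ
  refine ⟨hanti, fun l hl₁ hl₂ ↦ ?_⟩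
  set f : Module.End ℂ H := ((P - Q : H →L[ℂ] H) : H →ₗ[ℂ] H)
  have hker (c : ℂ) :
      LinearMap.ker ((P - Q - c • 1 : H →L[ℂ] H) : H →ₗ[ℂ] H) = f.eigenspace c := by
    rw [Module.End.eigenspace_def]; rfl
  have hker' (c : ℂ) :
      LinearMap.ker ((P - Q + c • 1 : H →L[ℂ] H) : H →ₗ[ℂ] H) = f.eigenspace (-c) := by
    rw [Module.End.eigenspace_def, neg_smul, sub_neg_eq_add]; rfl
  have hc : (l : ℂ) ^ 2 ≠ 1 := sq_ne_one_iff.mpr ⟨by exact_mod_cast hl₁, by exact_mod_cast hl₂⟩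
  have hbij := Module.End.bijOn_eigenspace_neg (g := ((1 - P - Q : H →L[ℂ] H) : Module.End ℂ H))
    congr(ContinuousLinearMap.toLinearMapRingHom $hanti)
    congr(ContinuousLinearMap.toLinearMapRingHom $hsq) hc
  rw [hker, hker']
  exact ⟨hbij, Submodule.rank_eq_of_bijOn hbij⟩

/-- Let `P, Q` be orthogonal projections on a complex Hilbert
space and set `W = I - P - Q`. Then `W (P - Q) = -(P - Q) W`, and for every real
`λ ≠ ±1` the operator `W` maps `Ker (P - Q - λ)` bijectively onto
`Ker (P - Q + λ)`; in particular these kernels have equal dimension. -/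
theorem anticommutation_and_kernel_symmetry
    {H : Type*} [NormedAddCommGroup H] [InnerProductSpace ℂ H] [CompleteSpace H]
    (P Q : H →L[ℂ] H)
    (hP : P * P = P) (hP' : IsSelfAdjoint P)
    (hQ : Q * Q = Q) (hQ' : IsSelfAdjoint Q)
    (W : H →L[ℂ] H) (hW : W = 1 - P - Q) :
    W * (P - Q) = -((P - Q) * W) ∧
    ∀ l : ℝ, l ≠ 1 → l ≠ -1 →
      (Set.BijOn W
        (LinearMap.ker ((P - Q - (l : ℂ) • 1 : H →L[ℂ] H) : H →ₗ[ℂ] H) : Set H)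
        (LinearMap.ker ((P - Q + (l : ℂ) • 1 : H →L[ℂ] H) : H →ₗ[ℂ] H) : Set H)) ∧
      Module.rank ℂ (LinearMap.ker ((P - Q - (l : ℂ) • 1 : H →L[ℂ] H) : H →ₗ[ℂ] H)) =
        Module.rank ℂ (LinearMap.ker ((P - Q + (l : ℂ) • 1 : H →L[ℂ] H) : H →ₗ[ℂ] H)) :=
  anticommutation_and_kernel_symmetry_general P Q hP hQ W hW
end

section
/- Let P and Q be orthogonal projections on a complex Hilbert space H such that P − Q is compact. Suppose (e_i)_{i∈ι} is a Hilbert basis of H consisting of eigenvectors of P − Q, with (P − Q)e_i = μ_i e_i, and suppose the family (μ_i) is absolutely summable. Then ∑_i μ_i = ind(P, Q) = dim Ker(P − Q − I) − dim Ker(P − Q + I); in particular this sum is an integer. -/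
open Module Submodule
open scoped InnerProductSpace

/-!
With `A = P - Q` and `B = 1 - P - Q`, idempotence of `P` and `Q` gives `A * B = -(B * A)` and
`A * A + B * B = 1`. Hence for `t ^ 2 ≠ 1` the operator `B` maps the `t`-eigenspace of `A`
isomorphically onto the `-t`-eigenspace. In the orthonormal eigenbasis the `t`-eigenspace is spanned
by the `e i` with `μ i = t`, finitely many when `t ≠ 0` since `μ` is summable, so the eigenvalues `t`
and `-t` occur equally often for `t ≠ ±1`. Grouping the absolutely convergent sum by values, all
contributions cancel except those of `1` and `-1`.
-/

theorem IsIdempotentElem.sub_mul_one_sub_sub {R : Type*} [Ring R] {P Q : R}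
    (hP : IsIdempotentElem P) (hQ : IsIdempotentElem Q) :
    (P - Q) * (1 - P - Q) = -((1 - P - Q) * (P - Q)) := by
  noncomm_ring
  rw [hP.eq, hQ.eq]
  abel

theorem IsIdempotentElem.sub_mul_self_add_one_sub_sub_mul_self {R : Type*} [Ring R] {P Q : R}
    (hP : IsIdempotentElem P) (hQ : IsIdempotentElem Q) :
    (P - Q) * (P - Q) + (1 - P - Q) * (1 - P - Q) = 1 := by
  noncomm_ring
  rw [hP.eq, hQ.eq]
  abel

namespace Module.End

variable {K M : Type*} [Field K] [AddCommGroup M] [Module K M] {A B : End K M} {t : K}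

theorem apply_mem_eigenspace_neg (hAB : A * B = -(B * A)) {x : M} (hx : x ∈ A.eigenspace t) :
    B x ∈ A.eigenspace (-t) := by
  rw [mem_eigenspace_iff] at hx ⊢
  have := congr($hAB x)
  simp only [mul_apply, LinearMap.neg_apply] at this
  rw [this, hx, map_smul, neg_smul]

theorem apply_apply_of_mem_eigenspace_s4 (hsq : A * A + B * B = 1) {x : M}
    (hx : x ∈ A.eigenspace t) : B (B x) = (1 - t ^ 2) • x := by
  rw [mem_eigenspace_iff] at hx
  have := congr($hsq x)
  simp only [LinearMap.add_apply, mul_apply, one_apply, hx, map_smul, smul_smul] at this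
  rw [sub_smul, one_smul, sq, eq_sub_of_add_eq' this]

noncomputable def eigenspaceNegEquiv (hAB : A * B = -(B * A)) (hsq : A * A + B * B = 1)
    (ht : t ^ 2 ≠ 1) : A.eigenspace t ≃ₗ[K] A.eigenspace (-t) :=
  have hc : (1 - t ^ 2) ≠ 0 := sub_ne_zero.mpr (Ne.symm ht)
  LinearEquiv.ofLinearMap (B.restrict fun _ => apply_mem_eigenspace_neg hAB)
    ((1 - t ^ 2)⁻¹ • B.restrict fun x hx => neg_neg t ▸ apply_mem_eigenspace_neg hAB hx)
    (by
      ext ⟨x, hx⟩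
      simp [LinearMap.restrict_apply, apply_apply_of_mem_eigenspace_s4 hsq hx, smul_smul, hc])
    (by
      ext ⟨x, hx⟩
      simp [LinearMap.restrict_apply, apply_apply_of_mem_eigenspace_s4 hsq hx, smul_smul, hc])

theorem finrank_eigenspace_neg (hAB : A * B = -(B * A)) (hsq : A * A + B * B = 1)
    (ht : t ^ 2 ≠ 1) : finrank K (A.eigenspace (-t)) = finrank K (A.eigenspace t) :=
  (eigenspaceNegEquiv hAB hsq ht).finrank_eq.symm

end Module.End

namespace HilbertBasis

variable {𝕜 H ι : Type*} [RCLike 𝕜] [NormedAddCommGroup H] [InnerProductSpace 𝕜 H]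
  (b : HilbertBasis ι 𝕜 H) {A : H →L[𝕜] H} {μ : ι → 𝕜}

theorem repr_apply_eq_mul (hA : ∀ i, A (b i) = μ i • b i) (x : H) (i : ι) :
    b.repr (A x) i = μ i * b.repr x i := by
  classical
  have hAx := ((b.hasSum_repr x).mapL A).mapL (innerSL 𝕜 (b i))
  have hterm : (fun j => innerSL 𝕜 (b i) (A (b.repr x j • b j))) =
      Pi.single i (μ i * b.repr x i) := by
    ext j
    by_cases hji : j = i
    · subst hji
      simp [hA, b.orthonormal.1 j, mul_comm]
    · simp [hA, b.orthonormal.inner_eq_zero (Ne.symm hji), hji]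
  rw [b.repr_apply_apply, ← innerSL_apply_apply, hAx.unique (hterm ▸ hasSum_pi_single i _)]

theorem mem_eigenspace_iff (hA : ∀ i, A (b i) = μ i • b i) {t : 𝕜} {x : H} :
    x ∈ End.eigenspace (A : End 𝕜 H) t ↔ ∀ i, μ i ≠ t → b.repr x i = 0 := by
  have hrepr : ∀ i, b.repr (A x - t • x) i = (μ i - t) * b.repr x i := fun i => by
    simp only [map_sub, map_smul, lp.coeFn_sub, lp.coeFn_smul, Pi.sub_apply, Pi.smul_apply,
      smul_eq_mul, b.repr_apply_eq_mul hA, sub_mul]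
  rw [End.mem_eigenspace_iff, ContinuousLinearMap.coe_coe, ← sub_eq_zero,
    ← b.repr.map_eq_zero_iff]
  simp only [lp.ext_iff, lp.coeFn_zero, funext_iff, Pi.zero_apply, hrepr, mul_eq_zero, sub_eq_zero]
  exact forall_congr' fun i => by tauto

theorem eigenspace_eq_span (hA : ∀ i, A (b i) = μ i • b i) {t : 𝕜}
    (hfin : {i | μ i = t}.Finite) :
    End.eigenspace (A : End 𝕜 H) t = span 𝕜 (b '' {i | μ i = t}) := by
  apply le_antisymm
  · intro x hx
    have hsum : HasSum (fun i => b.repr x i • b i) (∑ i ∈ hfin.toFinset, b.repr x i • b i) :=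
      hasSum_sum_of_ne_finset_zero fun i hi => by
        rw [(b.mem_eigenspace_iff hA).mp hx i (by simpa using hi), zero_smul]
    rw [(b.hasSum_repr x).unique hsum]
    exact sum_mem fun i hi => smul_mem _ _ (subset_span ⟨i, by simpa using hi, rfl⟩)
  · rw [span_le]
    rintro _ ⟨i, hi, rfl⟩
    rw [SetLike.mem_coe, End.mem_eigenspace_iff, ContinuousLinearMap.coe_coe, hA, hi]

theorem finrank_eigenspace (hA : ∀ i, A (b i) = μ i • b i) {t : 𝕜}
    (hfin : {i | μ i = t}.Finite) :
    finrank 𝕜 (End.eigenspace (A : End 𝕜 H) t) = Nat.card {i | μ i = t} := by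
  have := hfin.fintype
  rw [b.eigenspace_eq_span hA hfin, Set.image_eq_range, Nat.card_eq_fintype_card]
  exact finrank_span_eq_card (b.orthonormal.comp _ Subtype.val_injective).linearIndependent

end HilbertBasis

theorem Summable.finite_setOf_eq {ι G : Type*} [AddCommGroup G] [TopologicalSpace G]
    [IsTopologicalAddGroup G] [T1Space G] {μ : ι → G} (hμ : Summable μ) {t : G} (ht : t ≠ 0) :
    {i | μ i = t}.Finite := by
  have hne : ∀ᶠ i in Filter.cofinite, μ i ≠ t := hμ.tendsto_cofinite_zero.eventually_ne ht.symm
  simpa only [ne_eq, not_not] using Filter.eventually_cofinite.mp hne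

/-- Summing `μ` fibre by fibre gives `∑ t, Nat.card {i | μ i = t} • t`, in which the terms of `t`
and `-t` cancel except at `t = ±1`. -/
theorem Summable.tsum_eq_card_sub_card {ι 𝕜 : Type*} [NormedField 𝕜] [CompleteSpace 𝕜] [CharZero 𝕜]
    {μ : ι → 𝕜} (hμ : Summable μ)
    (hcard : ∀ t, t ≠ 1 → t ≠ -1 → Nat.card {i | μ i = t} = Nat.card {i | μ i = -t}) :
    ∑' i, μ i = Nat.card {i | μ i = 1} - Nat.card {i | μ i = -1} := by
  classical
  let N : 𝕜 → ℕ := fun t => Nat.card {i | μ i = t}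
  have hfiber : ∀ t, ∑' i : μ ⁻¹' {t}, μ i = N t • t := fun t => by
    rw [tsum_congr fun i : μ ⁻¹' {t} => i.2, tsum_const]
    rfl
  have hfib : HasSum (fun t => N t • t) (∑' i, μ i) := by
    simpa only [hfiber] using hμ.hasSum.tsum_fiberwise μ
  have hneg : HasSum (fun t => N (-t) • -t) (∑' i, μ i) :=
    ((Equiv.neg 𝕜).hasSum_iff (f := fun t => N t • t)).mpr hfib
  have hpair : HasSum (fun t => N t • t + N (-t) • -t)
      (∑ t ∈ ({1, -1} : Finset 𝕜), (N t • t + N (-t) • -t)) := by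
    refine hasSum_sum_of_ne_finset_zero fun t ht => ?_
    simp only [Finset.mem_insert, Finset.mem_singleton, not_or] at ht
    rw [smul_neg, show N t = N (-t) from hcard t ht.1 ht.2, add_neg_cancel]
  have h1 : (1 : 𝕜) ≠ -1 := by norm_num
  rw [Finset.sum_pair h1, neg_neg] at hpair
  have := (hfib.add hneg).unique hpair
  simp only [nsmul_eq_mul] at this
  linear_combination this / 2

theorem tsum_eigenvalues_eq_index_general
    {H : Type*} [NormedAddCommGroup H] [InnerProductSpace ℂ H] [CompleteSpace H]
    (P Q : H →L[ℂ] H)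
    (hP : P * P = P)
    (hQ : Q * Q = Q)
    {ι : Type*} (e : ι → H) (μ : ι → ℂ)
    (he : Orthonormal ℂ e)
    (hcompl : (Submodule.span ℂ (Set.range e)).topologicalClosure = ⊤)
    (heig : ∀ i, (P - Q) (e i) = μ i • e i)
    (hsum : Summable fun i => ‖μ i‖) :
    ∑' i, μ i =
      (((Module.finrank ℂ (LinearMap.ker ((P - Q - 1 : H →L[ℂ] H) : H →ₗ[ℂ] H)) : ℤ) -
        (Module.finrank ℂ (LinearMap.ker ((P - Q + 1 : H →L[ℂ] H) : H →ₗ[ℂ] H)) : ℤ) : ℤ) : ℂ) := by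
  let b := HilbertBasis.mk he hcompl.ge
  have hb : ∀ i, (P - Q) (b i) = μ i • b i := by simpa [b, HilbertBasis.coe_mk] using heig
  have hμ : Summable μ := hsum.of_norm
  let φ := ContinuousLinearMap.toLinearMapRingHom (R₁ := ℂ) (M₁ := H)
  have hPφ : IsIdempotentElem (φ P) := IsIdempotentElem.map hP φ
  have hQφ : IsIdempotentElem (φ Q) := IsIdempotentElem.map hQ φ
  have hdim : ∀ t ≠ 0,
      finrank ℂ (End.eigenspace (φ P - φ Q) t) = Nat.card {i | μ i = t} := fun t ht =>
    b.finrank_eigenspace hb (hμ.finite_setOf_eq ht)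
  have hcard : ∀ t : ℂ, t ≠ 1 → t ≠ -1 →
      Nat.card {i | μ i = t} = Nat.card {i | μ i = -t} := by
    intro t h1 h2
    rcases eq_or_ne t 0 with rfl | h0
    · rw [neg_zero]
    have ht : t ^ 2 ≠ 1 := by simp [h1, h2]
    rw [← hdim t h0, ← hdim (-t) (neg_ne_zero.mpr h0), End.finrank_eigenspace_neg
      (hPφ.sub_mul_one_sub_sub hQφ) (hPφ.sub_mul_self_add_one_sub_sub_mul_self hQφ) ht]
  rw [hμ.tsum_eq_card_sub_card hcard, ← hdim 1 one_ne_zero, ← hdim (-1) (by norm_num),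
    End.eigenspace_def, End.eigenspace_def, one_smul, neg_smul, one_smul, sub_neg_eq_add]
  push_cast
  rfl

/-- Let `P, Q` be orthogonal projections on a complex Hilbert
space with `P - Q` compact. If `(e i)` is a complete orthonormal family of
eigenvectors of `P - Q`, `(P - Q) (e i) = μ i • e i`, and `(μ i)` is absolutely
summable, then `∑ μ i = ind (P, Q) = dim Ker (P - Q - I) - dim Ker (P - Q + I)`;
in particular the sum is an integer. -/
theorem tsum_eigenvalues_eq_index
    {H : Type*} [NormedAddCommGroup H] [InnerProductSpace ℂ H] [CompleteSpace H]
    (P Q : H →L[ℂ] H)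
    (hP : P * P = P) (hP' : IsSelfAdjoint P)
    (hQ : Q * Q = Q) (hQ' : IsSelfAdjoint Q)
    (hcomp : IsCompactOperator ⇑(P - Q))
    {ι : Type*} (e : ι → H) (μ : ι → ℂ)
    (he : Orthonormal ℂ e)
    (hcompl : (Submodule.span ℂ (Set.range e)).topologicalClosure = ⊤)
    (heig : ∀ i, (P - Q) (e i) = μ i • e i)
    (hsum : Summable fun i => ‖μ i‖) :
    ∑' i, μ i =
      (((Module.finrank ℂ (LinearMap.ker ((P - Q - 1 : H →L[ℂ] H) : H →ₗ[ℂ] H)) : ℤ) -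
        (Module.finrank ℂ (LinearMap.ker ((P - Q + 1 : H →L[ℂ] H) : H →ₗ[ℂ] H)) : ℤ) : ℤ) : ℂ) :=
  tsum_eigenvalues_eq_index_general P Q hP hQ e μ he hcompl heig hsum
end

section
/- Let P and Q be orthogonal projections on a complex Hilbert space H such that P − Q is compact, and let T : Ran P → Ran Q be the restriction of QP, i.e. T x = Q x for x ∈ Ran P. Then the kernel of T equals Ker(P − Q − I), the range of T is closed in Ran Q, the orthogonal complement of Ran T within Ran Q equals Ker(P − Q + I), and consequently T is a Fredholm operator whose index dim Ker T − dim Coker T equals ind(P, Q) = dim Ker(P − Q − I) − dim Ker(P − Q + I). -/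
/-!
On `Ran P` we have `Q = 1 - (P - Q)`, so `T` is the restriction of a compact perturbation of the
identity to a closed subspace. Such a map is bounded below on the orthogonal complement of its
kernel (a normalised sequence on which it tends to zero has a convergent subsequence, whose limit
would be a fixed point of norm one), hence it has closed range.

For orthogonal projections, `(P - Q) x = x` gives `‖x‖² = ‖P x‖² - ‖Q x‖² ≤ ‖x‖² - ‖Q x‖²`, so
`Ker (P - Q - I) = Ran P ∩ Ker Q = Ker T`; symmetrically `Ker (P - Q + I) = Ran Q ∩ Ker P`, which
is the orthogonal complement of `Q (Ran P)` in `Ran Q` because `⟪Q x, y⟫ = ⟪x, P y⟫` for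
`x ∈ Ran P`, `y ∈ Ran Q`. Both eigenspaces are finite-dimensional since `P - Q` is compact.
-/

open Filter Topology RCLike
open scoped InnerProductSpace

section CompactPerturbation

variable {𝕜 X : Type*} [RCLike 𝕜] [NormedAddCommGroup X] [NormedSpace 𝕜 X]

theorem IsCompactOperator.exists_antilipschitzWith_one_sub_comp_subtypeL {A : X →L[𝕜] X}
    (hA : IsCompactOperator A) {S : Submodule 𝕜 X} (hS : IsClosed (S : Set X))
    (hfix : ∀ x ∈ S, A x = x → x = 0) :
    ∃ K, AntilipschitzWith K ((1 - A) ∘L S.subtypeL) := by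
  rw [antilipschitzWith_iff_exists_mul_le_norm]
  by_contra! h
  have hunit : ∀ n : ℕ, ∃ u ∈ S, ‖u‖ = 1 ∧ ‖u - A u‖ < 1 / (n + 1) := by
    intro n
    obtain ⟨⟨x, hxS⟩, hx⟩ := h (1 / (n + 1)) (by positivity)
    simp only [ContinuousLinearMap.sub_comp, sub_apply,
      ContinuousLinearMap.comp_apply, Submodule.coe_subtypeL, Submodule.subtype_apply,
      one_apply_eq_self, Submodule.coe_norm] at hx
    have hx0 : 0 < ‖x‖ := norm_pos_iff.mpr (by rintro rfl; simp at hx)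
    refine ⟨(‖x‖⁻¹ : 𝕜) • x, S.smul_mem _ hxS, ?_, ?_⟩
    · simp [norm_smul, hx0.ne']
    · rw [map_smul, ← smul_sub, norm_smul, norm_inv, norm_algebraMap', norm_norm,
        inv_mul_lt_iff₀ hx0, mul_comm]
      exact hx
  choose u huS hu_norm hu_small using hunit
  obtain ⟨K, hK, hAK⟩ := hA.image_closedBall_subset_compact 1
  obtain ⟨a, -, φ, hφ, hAu⟩ := hK.tendsto_subseq fun n =>
    hAK ⟨u n, by simp [hu_norm], rfl⟩
  have hsmall : Tendsto (fun n => u (φ n) - A (u (φ n))) atTop (𝓝 0) :=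
    squeeze_zero_norm (fun n => (hu_small (φ n)).le)
      (tendsto_one_div_add_atTop_nhds_zero_nat.comp hφ.tendsto_atTop)
  have hu : Tendsto (fun n => u (φ n)) atTop (𝓝 a) := by
    simpa using hsmall.add hAu
  have haS : a ∈ S := hS.mem_of_tendsto hu (Eventually.of_forall fun n => huS (φ n))
  have ha_norm : ‖a‖ = 1 := tendsto_nhds_unique hu.norm (by simp [hu_norm])
  have hAa : A a = a := tendsto_nhds_unique ((A.continuous.tendsto a).comp hu) hAu
  simp [hfix a haS hAa] at ha_norm

end CompactPerturbation

section Hilbert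

variable {𝕜 H F : Type*} [RCLike 𝕜] [NormedAddCommGroup H] [InnerProductSpace 𝕜 H]

theorem Submodule.map_inf_orthogonal_eq_map [AddCommGroup F] [Module 𝕜 F] {N S : Submodule 𝕜 H}
    [N.HasOrthogonalProjection] {f : H →ₗ[𝕜] F} (hNS : N ≤ S) (hNf : N ≤ LinearMap.ker f) :
    (S ⊓ Nᗮ).map f = S.map f := by
  refine le_antisymm (Submodule.map_mono inf_le_left) ?_
  rintro _ ⟨x, hxS, rfl⟩
  obtain ⟨n, hn, e, he, rfl⟩ := Submodule.exists_add_mem_mem_orthogonal (K := N) x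
  refine ⟨e, ⟨?_, he⟩, by rw [map_add, LinearMap.mem_ker.mp (hNf hn), zero_add]⟩
  simpa using S.sub_mem hxS (hNS hn)

variable [CompleteSpace H]

theorem IsCompactOperator.isClosed_map_one_sub {A : H →L[𝕜] H} (hA : IsCompactOperator A)
    {S : Submodule 𝕜 H} (hS : IsClosed (S : Set H)) :
    IsClosed ((S.map ((1 - A : H →L[𝕜] H) : H →ₗ[𝕜] H) : Submodule 𝕜 H) : Set H) := by
  set N := S ⊓ LinearMap.ker ((1 - A : H →L[𝕜] H) : H →ₗ[𝕜] H)
  have : CompleteSpace N := (hS.inter (1 - A).isClosed_ker).completeSpace_coe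
  set E := S ⊓ Nᗮ
  have hE : IsClosed (E : Set H) := hS.inter (Submodule.isClosed_orthogonal N)
  have : CompleteSpace E := hE.completeSpace_coe
  -- removing the fixed points `N` makes `1 - A` injective on `E` without changing the image of `S`
  obtain ⟨K, hK⟩ := hA.exists_antilipschitzWith_one_sub_comp_subtypeL hE fun x hx hAx => by
    have hxN : x ∈ N := ⟨hx.1, by simp [hAx]⟩
    simpa using N.inf_orthogonal_eq_bot.le ⟨hxN, hx.2⟩
  rw [← Submodule.map_inf_orthogonal_eq_map inf_le_left inf_le_right]
  convert hK.isClosed_range ((1 - A) ∘L E.subtypeL).uniformContinuous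
  ext y
  constructor
  · rintro ⟨x, hx, rfl⟩
    exact ⟨⟨x, hx⟩, rfl⟩
  · rintro ⟨x, rfl⟩
    exact ⟨x, x.2, rfl⟩

theorem IsCompactOperator.finiteDimensional_ker_sub_smul_one {A : H →L[𝕜] H}
    (hA : IsCompactOperator A) {μ : 𝕜} (hμ : μ ≠ 0) :
    FiniteDimensional 𝕜 (LinearMap.ker ((A - μ • 1 : H →L[𝕜] H) : H →ₗ[𝕜] H)) := by
  have := ContinuousLinearMap.finite_dimensional_eigenspace hA μ hμ
  rwa [Module.End.eigenspace_def] at this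

end Hilbert

section Projections

variable {𝕜 H : Type*} [RCLike 𝕜] [NormedAddCommGroup H] [InnerProductSpace 𝕜 H]
  {P Q : H →L[𝕜] H}

theorem IsIdempotentElem.mem_range_iff_apply_eq_self (hP : IsIdempotentElem P) {x : H} :
    x ∈ LinearMap.range (P : H →ₗ[𝕜] H) ↔ P x = x :=
  LinearMap.IsIdempotentElem.mem_range_iff (ContinuousLinearMap.IsIdempotentElem.toLinearMap hP)

variable [CompleteSpace H]

theorem IsIdempotentElem.isClosed_map_range_of_isCompactOperator_sub (hP : IsIdempotentElem P)
    (hPQ : IsCompactOperator (P - Q)) :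
    IsClosed (((LinearMap.range (P : H →ₗ[𝕜] H)).map (Q : H →ₗ[𝕜] H) : Submodule 𝕜 H) : Set H) := by
  have hQ : (LinearMap.range (P : H →ₗ[𝕜] H)).map (Q : H →ₗ[𝕜] H) =
      (LinearMap.range (P : H →ₗ[𝕜] H)).map ((1 - (P - Q) : H →L[𝕜] H) : H →ₗ[𝕜] H) := by
    ext y
    simp only [Submodule.mem_map]
    refine exists_congr fun x => and_congr_right fun hx => ?_
    simp [hP.mem_range_iff_apply_eq_self.mp hx]
  rw [hQ]
  exact hPQ.isClosed_map_one_sub (ContinuousLinearMap.IsIdempotentElem.isClosed_range hP)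

namespace IsStarProjection

theorem re_inner_apply_self (hP : IsStarProjection P) (x : H) : re ⟪P x, x⟫_𝕜 = ‖P x‖ ^ 2 := by
  have h : ⟪P x, x⟫_𝕜 = ⟪P x, P x⟫_𝕜 := by
    conv_lhs => rw [← hP.isIdempotentElem.eq, mul_apply_eq_comp]
    exact hP.isSelfAdjoint.isSymmetric (P x) x
  rw [h, inner_self_eq_norm_sq]

theorem norm_apply_le (hP : IsStarProjection P) (x : H) : ‖P x‖ ≤ ‖x‖ := by
  have h := hP.re_inner_apply_self x ▸ re_inner_le_norm (P x) x
  nlinarith [norm_nonneg (P x), norm_nonneg x]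

theorem sub_apply_eq_self_iff (hP : IsStarProjection P) (hQ : IsStarProjection Q) (x : H) :
    (P - Q) x = x ↔ P x = x ∧ Q x = 0 := by
  refine ⟨fun h => ?_, fun ⟨hPx, hQx⟩ => by simp [hPx, hQx]⟩
  have hnorm : ‖x‖ ^ 2 = ‖P x‖ ^ 2 - ‖Q x‖ ^ 2 := by
    rw [← inner_self_eq_norm_sq (𝕜 := 𝕜), ← hP.re_inner_apply_self, ← hQ.re_inner_apply_self,
      ← map_sub, ← inner_sub_left, ← sub_apply, h]
  have hQx : Q x = 0 := by
    rw [← norm_eq_zero]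
    nlinarith [hP.norm_apply_le x, norm_nonneg (P x), norm_nonneg (Q x)]
  exact ⟨by simpa [hQx] using h, hQx⟩

theorem mem_ker_sub_sub_one_iff (hP : IsStarProjection P) (hQ : IsStarProjection Q) {x : H} :
    x ∈ LinearMap.ker ((P - Q - 1 : H →L[𝕜] H) : H →ₗ[𝕜] H) ↔ P x = x ∧ Q x = 0 := by
  rw [LinearMap.mem_ker, ContinuousLinearMap.coe_coe, sub_apply, one_apply_eq_self, sub_eq_zero]
  exact hP.sub_apply_eq_self_iff hQ x

theorem mem_ker_sub_add_one_iff (hP : IsStarProjection P) (hQ : IsStarProjection Q) {x : H} :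
    x ∈ LinearMap.ker ((P - Q + 1 : H →L[𝕜] H) : H →ₗ[𝕜] H) ↔ Q x = x ∧ P x = 0 := by
  rw [show P - Q + 1 = -(Q - P - 1) by abel, ContinuousLinearMap.toLinearMap_neg, LinearMap.ker_neg]
  exact hQ.mem_ker_sub_sub_one_iff hP

end IsStarProjection

end Projections

section Restriction

variable {𝕜 H : Type*} [RCLike 𝕜] [NormedAddCommGroup H] [InnerProductSpace 𝕜 H] [CompleteSpace H]
  {P Q : H →L[𝕜] H} {T : LinearMap.range (P : H →ₗ[𝕜] H) →L[𝕜] LinearMap.range (Q : H →ₗ[𝕜] H)}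

theorem IsStarProjection.inner_apply_eq_inner_apply_of_mem_range (hP : IsStarProjection P)
    (hQ : IsStarProjection Q) {x y : H} (hx : x ∈ LinearMap.range (P : H →ₗ[𝕜] H))
    (hy : y ∈ LinearMap.range (Q : H →ₗ[𝕜] H)) : ⟪Q x, y⟫_𝕜 = ⟪x, P y⟫_𝕜 :=
  calc ⟪Q x, y⟫_𝕜 = ⟪x, Q y⟫_𝕜 := hQ.isSelfAdjoint.isSymmetric x y
    _ = ⟪P x, y⟫_𝕜 := by
      rw [hQ.isIdempotentElem.mem_range_iff_apply_eq_self.mp hy,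
        hP.isIdempotentElem.mem_range_iff_apply_eq_self.mp hx]
    _ = ⟪x, P y⟫_𝕜 := hP.isSelfAdjoint.isSymmetric x y

theorem map_subtype_ker_eq_ker_sub_sub_one (hP : IsStarProjection P) (hQ : IsStarProjection Q)
    (hT : ∀ x, (T x : H) = Q x) :
    (LinearMap.ker T.toLinearMap).map (LinearMap.range (P : H →ₗ[𝕜] H)).subtype =
      LinearMap.ker ((P - Q - 1 : H →L[𝕜] H) : H →ₗ[𝕜] H) := by
  ext x
  rw [hP.mem_ker_sub_sub_one_iff hQ, ← hP.isIdempotentElem.mem_range_iff_apply_eq_self]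
  constructor
  · rintro ⟨y, hy, rfl⟩
    exact ⟨y.2, by rw [Submodule.subtype_apply, ← hT, show T y = 0 from hy, ZeroMemClass.coe_zero]⟩
  · rintro ⟨hx, hQx⟩
    exact ⟨⟨x, hx⟩, Subtype.ext ((hT _).trans hQx), rfl⟩

theorem map_subtype_orthogonal_range_eq_ker_sub_add_one (hP : IsStarProjection P)
    (hQ : IsStarProjection Q) (hT : ∀ x, (T x : H) = Q x) :
    ((LinearMap.range T.toLinearMap)ᗮ).map (LinearMap.range (Q : H →ₗ[𝕜] H)).subtype =
      LinearMap.ker ((P - Q + 1 : H →L[𝕜] H) : H →ₗ[𝕜] H) := by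
  have key (y : H) (hy : y ∈ LinearMap.range (Q : H →ₗ[𝕜] H)) :
      (⟨y, hy⟩ : LinearMap.range (Q : H →ₗ[𝕜] H)) ∈ (LinearMap.range T.toLinearMap)ᗮ ↔
        P y = 0 := by
    simp only [Submodule.mem_orthogonal, LinearMap.mem_range, forall_exists_index,
      forall_apply_eq_imp_iff, Submodule.coe_inner, ContinuousLinearMap.coe_coe, hT]
    refine ⟨fun h => ?_, fun h x => ?_⟩
    · have hPy : ⟪Q (P y), y⟫_𝕜 = 0 := h ⟨P y, LinearMap.mem_range_self _ y⟩
      rwa [hP.inner_apply_eq_inner_apply_of_mem_range hQ (x := P y)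
        (LinearMap.mem_range_self _ y) hy, inner_self_eq_zero] at hPy
    · rw [hP.inner_apply_eq_inner_apply_of_mem_range hQ x.2 hy, h, inner_zero_right]
  ext y
  rw [hP.mem_ker_sub_add_one_iff hQ, ← hQ.isIdempotentElem.mem_range_iff_apply_eq_self]
  constructor
  · rintro ⟨⟨y, hy⟩, h, rfl⟩
    exact ⟨hy, (key y hy).mp h⟩
  · rintro ⟨hy, hPy⟩
    exact ⟨⟨y, hy⟩, (key y hy).mpr hPy, rfl⟩

theorem isClosed_range_of_isCompactOperator_sub (hP : IsIdempotentElem P)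
    (hPQ : IsCompactOperator (P - Q)) (hT : ∀ x, (T x : H) = Q x) :
    IsClosed (LinearMap.range T.toLinearMap : Set (LinearMap.range (Q : H →ₗ[𝕜] H))) := by
  have hrange : (LinearMap.range T.toLinearMap : Set (LinearMap.range (Q : H →ₗ[𝕜] H))) =
      Subtype.val ⁻¹' ((LinearMap.range (P : H →ₗ[𝕜] H)).map (Q : H →ₗ[𝕜] H) : Set H) := by
    ext y
    constructor
    · rintro ⟨x, rfl⟩
      exact ⟨x, x.2, (hT x).symm⟩
    · rintro ⟨x, hx, hxy⟩
      exact ⟨⟨x, hx⟩, Subtype.ext ((hT _).trans hxy)⟩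
  rw [hrange]
  exact (hP.isClosed_map_range_of_isCompactOperator_sub hPQ).preimage continuous_subtype_val

end Restriction

/-- Let `P, Q` be orthogonal projections on a complex Hilbert
space with `P - Q` compact, and let `T : Ran P → Ran Q` be the restriction of
`QP`. Then `Ker T = Ker (P - Q - I)`, `Ran T` is closed in `Ran Q`, the
orthogonal complement of `Ran T` within `Ran Q` equals `Ker (P - Q + I)`, and
`T` is Fredholm with index `ind (P, Q)`. -/
theorem restriction_QP_fredholm_index
    {H : Type*} [NormedAddCommGroup H] [InnerProductSpace ℂ H] [CompleteSpace H]
    (P Q : H →L[ℂ] H)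
    (hP : P * P = P) (hP' : IsSelfAdjoint P)
    (hQ : Q * Q = Q) (hQ' : IsSelfAdjoint Q)
    (hcomp : IsCompactOperator ⇑(P - Q))
    (T : LinearMap.range (P : H →ₗ[ℂ] H) →L[ℂ] LinearMap.range (Q : H →ₗ[ℂ] H))
    (hT : ∀ x : LinearMap.range (P : H →ₗ[ℂ] H), (T x : H) = Q x) :
    (LinearMap.ker (T : LinearMap.range (P : H →ₗ[ℂ] H) →ₗ[ℂ] LinearMap.range (Q : H →ₗ[ℂ] H))).map (LinearMap.range (P : H →ₗ[ℂ] H)).subtype = LinearMap.ker ((P - Q - 1 : H →L[ℂ] H) : H →ₗ[ℂ] H) ∧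
    IsClosed ((LinearMap.range (T : LinearMap.range (P : H →ₗ[ℂ] H) →ₗ[ℂ] LinearMap.range (Q : H →ₗ[ℂ] H)) : Submodule ℂ (LinearMap.range (Q : H →ₗ[ℂ] H))) :
      Set (LinearMap.range (Q : H →ₗ[ℂ] H))) ∧
    ((LinearMap.range (T : LinearMap.range (P : H →ₗ[ℂ] H) →ₗ[ℂ] LinearMap.range (Q : H →ₗ[ℂ] H)))ᗮ).map (LinearMap.range (Q : H →ₗ[ℂ] H)).subtype = LinearMap.ker ((P - Q + 1 : H →L[ℂ] H) : H →ₗ[ℂ] H) ∧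
    FiniteDimensional ℂ (LinearMap.ker (T : LinearMap.range (P : H →ₗ[ℂ] H) →ₗ[ℂ] LinearMap.range (Q : H →ₗ[ℂ] H))) ∧
    FiniteDimensional ℂ ((LinearMap.range (T : LinearMap.range (P : H →ₗ[ℂ] H) →ₗ[ℂ] LinearMap.range (Q : H →ₗ[ℂ] H)))ᗮ) ∧
    (Module.finrank ℂ (LinearMap.ker (T : LinearMap.range (P : H →ₗ[ℂ] H) →ₗ[ℂ] LinearMap.range (Q : H →ₗ[ℂ] H))) : ℤ) -
      (Module.finrank ℂ ((LinearMap.range (T : LinearMap.range (P : H →ₗ[ℂ] H) →ₗ[ℂ] LinearMap.range (Q : H →ₗ[ℂ] H)))ᗮ) : ℤ) =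
    (Module.finrank ℂ (LinearMap.ker ((P - Q - 1 : H →L[ℂ] H) : H →ₗ[ℂ] H)) : ℤ) -
      (Module.finrank ℂ (LinearMap.ker ((P - Q + 1 : H →L[ℂ] H) : H →ₗ[ℂ] H)) : ℤ) := by
  have hPp : IsStarProjection P := ⟨hP, hP'⟩
  have hQp : IsStarProjection Q := ⟨hQ, hQ'⟩
  have hker := map_subtype_ker_eq_ker_sub_sub_one hPp hQp hT
  have hcoker := map_subtype_orthogonal_range_eq_ker_sub_add_one hPp hQp hT
  have : FiniteDimensional ℂ (LinearMap.ker ((P - Q - 1 : H →L[ℂ] H) : H →ₗ[ℂ] H)) := by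
    rw [← one_smul ℂ (1 : H →L[ℂ] H)]
    exact hcomp.finiteDimensional_ker_sub_smul_one one_ne_zero
  have : FiniteDimensional ℂ (LinearMap.ker ((P - Q + 1 : H →L[ℂ] H) : H →ₗ[ℂ] H)) := by
    rw [← sub_neg_eq_add, ← neg_one_smul ℂ (1 : H →L[ℂ] H)]
    exact hcomp.finiteDimensional_ker_sub_smul_one (neg_ne_zero.mpr one_ne_zero)
  let eKer := (Submodule.equivSubtypeMap _ _).trans (LinearEquiv.ofEq _ _ hker)
  let eCoker := (Submodule.equivSubtypeMap _ _).trans (LinearEquiv.ofEq _ _ hcoker)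
  exact ⟨hker, isClosed_range_of_isCompactOperator_sub hP hcomp hT, hcoker,
    eKer.symm.finiteDimensional, eCoker.symm.finiteDimensional,
    by rw [eKer.finrank_eq, eCoker.finrank_eq]⟩
end

section
/- Let A and B be bounded linear operators on a complex Hilbert space H such that B − A is compact. Let Γ be a circle in the complex plane (with given center c and radius r > 0) that does not meet the spectrum of A nor the spectrum of B, and define the Riesz projections P = (2πi)^{−1} ∮_Γ (zI − A)^{−1} dz and Q = (2πi)^{−1} ∮_Γ (zI − B)^{−1} dz (contour integrals over the positively oriented circle). Then P − Q is a compact operator. -/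
/-!
The second resolvent identity `R_A(z) - R_B(z) = R_A(z) (A - B) R_B(z)` makes the integrand of
`P - Q` a compact operator at every point of `Γ`, and it is continuous there because `Γ` lies in
both resolvent sets. Compact operators form a closed subspace, which contains every such integral
since a normalised integral is an average, i.e. a limit of convex combinations.
-/

open MeasureTheory Metric Complex
open scoped Interval

theorem Submodule.integral_mem_of_isClosed {α E : Type*} [MeasurableSpace α]
    [NormedAddCommGroup E] [NormedSpace ℝ E] [CompleteSpace E]
    {μ : Measure α} [IsFiniteMeasure μ]
    (S : Submodule ℝ E) (hS : IsClosed (S : Set E)) {f : α → E} (hf : ∀ᵐ x ∂μ, f x ∈ S) :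
    ∫ x, f x ∂μ ∈ S := by
  by_cases hfi : Integrable f μ
  · rcases eq_zero_or_neZero μ with rfl | _
    · rw [integral_zero_measure]
      exact S.zero_mem
    rw [← measure_smul_average]
    exact S.smul_mem _ (S.convex.average_mem hS hf hfi)
  · rw [integral_undef hfi]
    exact S.zero_mem

theorem Submodule.intervalIntegral_mem_of_isClosed {E : Type*}
    [NormedAddCommGroup E] [NormedSpace ℝ E] [CompleteSpace E]
    {μ : Measure ℝ} [IsLocallyFiniteMeasure μ]
    (S : Submodule ℝ E) (hS : IsClosed (S : Set E)) {f : ℝ → E} {a b : ℝ}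
    (hf : ∀ x ∈ Ι a b, f x ∈ S) : ∫ x in a..b, f x ∂μ ∈ S := by
  have : IsFiniteMeasure (μ.restrict (Ι a b)) :=
    isFiniteMeasure_restrict.mpr measure_Ioc_lt_top.ne
  rw [intervalIntegral.intervalIntegral_eq_integral_uIoc]
  exact S.smul_mem _
    (S.integral_mem_of_isClosed hS (ae_restrict_of_forall_mem measurableSet_uIoc hf))

theorem IsCompactOperator.circleIntegral {E F : Type*} [NormedAddCommGroup E] [NormedSpace ℂ E]
    [NormedAddCommGroup F] [NormedSpace ℂ F] [CompleteSpace F]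
    {f : ℂ → E →L[ℂ] F} {c : ℂ} {R : ℝ}
    (hf : ∀ z ∈ sphere c |R|, IsCompactOperator ⇑(f z)) :
    IsCompactOperator ⇑(∮ z in C(c, R), f z) :=
  ((compactOperator (RingHom.id ℂ) E F).restrictScalars ℝ).intervalIntegral_mem_of_isClosed
    isClosed_setOfPred_isCompactOperator fun θ _ =>
      (hf _ (circleMap_mem_sphere' c R θ)).smul (deriv (circleMap c R) θ)

theorem circleIntegral_eq_integral_exp {G : Type*} [NormedAddCommGroup G] [NormedSpace ℂ G]
    (f : ℂ → G) (c : ℂ) (R : ℝ) :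
    (∮ z in C(c, R), f z) = ∫ θ in (0 : ℝ)..(2 * Real.pi),
      (I * R * exp (θ * I)) • f (c + R * exp (θ * I)) := by
  simp only [circleIntegral, deriv_circleMap, circleMap, zero_add]
  congr 1
  ext θ
  ring_nf

theorem continuousOn_resolvent {𝕜 A : Type*} [NormedField 𝕜] [NormedRing A] [NormedAlgebra 𝕜 A]
    [CompleteSpace A] (a : A) : ContinuousOn (resolvent a) (resolventSet 𝕜 a) := by
  rintro z ⟨u, hu⟩
  have hinv : ContinuousAt Ring.inverse (algebraMap 𝕜 A z - a) :=
    hu ▸ NormedRing.inverse_continuousAt u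
  exact (hinv.comp (f := fun w => algebraMap 𝕜 A w - a)
    ((continuous_algebraMap 𝕜 A).sub continuous_const).continuousAt).continuousWithinAt

theorem isCompactOperator_resolvent_sub_resolvent {𝕜 : Type*} [NontriviallyNormedField 𝕜]
    {E : Type*} [NormedAddCommGroup E] [NormedSpace 𝕜 E] {a b : E →L[𝕜] E} {z : 𝕜}
    (hab : IsCompactOperator (b - a)) (ha : z ∈ resolventSet 𝕜 a) (hb : z ∈ resolventSet 𝕜 b) :
    IsCompactOperator (resolvent a z - resolvent b z) := by
  rw [spectrum.resolvent_sub_resolvent ha hb, ← neg_sub, mul_neg, neg_mul]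
  exact ((hab.comp_clm _).clm_comp _).neg

/-- Let `A, B` be bounded operators on a complex Hilbert
space with `B - A` compact. Let `Γ` be the circle of center `c` and radius
`r > 0` avoiding the spectra of `A` and `B`, and let
`P = (2πi)⁻¹ ∮_Γ (z - A)⁻¹ dz`, `Q = (2πi)⁻¹ ∮_Γ (z - B)⁻¹ dz` be the Riesz
projections (contour integrals over the positively oriented circle). Then
`P - Q` is a compact operator. -/
theorem riesz_projection_difference_compact
    {H : Type*} [NormedAddCommGroup H] [InnerProductSpace ℂ H] [CompleteSpace H]
    (A B : H →L[ℂ] H)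
    (hAB : IsCompactOperator ⇑(B - A))
    (c : ℂ) (r : ℝ) (hr : 0 < r)
    (hΓ : ∀ z : ℂ, ‖z - c‖ = r →
      z ∉ spectrum ℂ A ∧ z ∉ spectrum ℂ B)
    (P Q : H →L[ℂ] H)
    (hPdef : P = (2 * Real.pi * Complex.I)⁻¹ •
      ∫ θ in (0 : ℝ)..(2 * Real.pi),
        (Complex.I * r * Complex.exp (θ * Complex.I)) •
          Ring.inverse
            ((c + r * Complex.exp (θ * Complex.I)) • (1 : H →L[ℂ] H) - A))
    (hQdef : Q = (2 * Real.pi * Complex.I)⁻¹ •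
      ∫ θ in (0 : ℝ)..(2 * Real.pi),
        (Complex.I * r * Complex.exp (θ * Complex.I)) •
          Ring.inverse
            ((c + r * Complex.exp (θ * Complex.I)) • (1 : H →L[ℂ] H) - B)) :
    IsCompactOperator ⇑(P - Q) := by
  have hsphere : ∀ z ∈ sphere c |r|, z ∈ resolventSet ℂ A ∧ z ∈ resolventSet ℂ B := fun z hz => by
    simpa only [spectrum, Set.notMem_compl_iff] using
      hΓ z (by rwa [abs_of_pos hr, mem_sphere_iff_norm] at hz)
  have hP : P = (2 * Real.pi * I)⁻¹ • ∮ z in C(c, r), resolvent A z := by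
    simp only [hPdef, circleIntegral_eq_integral_exp, resolvent, Algebra.algebraMap_eq_smul_one]
  have hQ : Q = (2 * Real.pi * I)⁻¹ • ∮ z in C(c, r), resolvent B z := by
    simp only [hQdef, circleIntegral_eq_integral_exp, resolvent, Algebra.algebraMap_eq_smul_one]
  rw [hP, hQ, ← smul_sub, ← circleIntegral.integral_sub
    ((continuousOn_resolvent A).mono fun z hz => (hsphere z hz).1).circleIntegrable'
    ((continuousOn_resolvent B).mono fun z hz => (hsphere z hz).2).circleIntegrable']
  exact (compactOperator (RingHom.id ℂ) H H).smul_mem _ <| IsCompactOperator.circleIntegral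
    fun z hz => isCompactOperator_resolvent_sub_resolvent hAB (hsphere z hz).1 (hsphere z hz).2
end

section
/- Let A and B be n×n Hermitian complex matrices with eigenvalues α₁ ≤ ⋯ ≤ α_n and β₁ ≤ ⋯ ≤ β_n (counted with multiplicity), and let φ : ℝ → ℝ be continuously differentiable. Define ξ(t) = N_A(t) − N_B(t), where N_A(t) = #{j : α_j < t} and N_B(t) = #{j : β_j < t}. Then Tr φ(B) − Tr φ(A) = ∫_ℝ φ′(t) ξ(t) dt, where φ(A) and φ(B) are defined by the functional calculus for Hermitian matrices (applying φ to the eigenvalues in a spectral decomposition). -/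
open MeasureTheory Set Finset

/-!
Conjugating by a unitary does not change the trace, so both sides of the formula only involve the
eigenvalues: the left side is `∑ j, (φ (β j) - φ (α j))`. The spectral shift function is a sum of
`n` differences of step functions `𝟙(α j < t) - 𝟙(β j < t)`, i.e. of signed indicators of the
intervals between `α j` and `β j`, and integrating `φ'` against each one gives
`φ (β j) - φ (α j)` by the fundamental theorem of calculus.
-/

lemma Matrix.trace_unitary_mul_diagonal_mul_star {ι R : Type*} [Fintype ι] [DecidableEq ι]
    [CommRing R] [StarRing R] {U : Matrix ι ι R} (hU : U ∈ Matrix.unitaryGroup ι R) (d : ι → R) :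
    (U * Matrix.diagonal d * star U).trace = ∑ i, d i := by
  rw [Matrix.trace_mul_cycle, hU.1, Matrix.one_mul, Matrix.trace_diagonal]

lemma mul_ite_lt_sub_ite_lt_eq_indicator_sub_indicator (g : ℝ → ℝ) (a b : ℝ) :
    (fun t => g t * ((if a < t then (1 : ℝ) else 0) - if b < t then 1 else 0)) =
      (Ioc a b).indicator g - (Ioc b a).indicator g := by
  funext t
  by_cases hat : a < t <;> by_cases hbt : b < t <;>
    simp [hat, hbt, not_lt.mp]

lemma integrable_mul_ite_lt_sub_ite_lt {g : ℝ → ℝ} {a b : ℝ}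
    (hg : IntervalIntegrable g volume a b) :
    Integrable (fun t => g t * ((if a < t then (1 : ℝ) else 0) - if b < t then 1 else 0)) := by
  rw [mul_ite_lt_sub_ite_lt_eq_indicator_sub_indicator]
  exact (hg.1.integrable_indicator measurableSet_Ioc).sub
    (hg.2.integrable_indicator measurableSet_Ioc)

lemma integral_mul_ite_lt_sub_ite_lt {g : ℝ → ℝ} {a b : ℝ}
    (hg : IntervalIntegrable g volume a b) :
    ∫ t, g t * ((if a < t then (1 : ℝ) else 0) - if b < t then 1 else 0) = ∫ t in a..b, g t := by
  rw [mul_ite_lt_sub_ite_lt_eq_indicator_sub_indicator, Pi.sub_def,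
    integral_sub (hg.1.integrable_indicator measurableSet_Ioc)
      (hg.2.integrable_indicator measurableSet_Ioc),
    integral_indicator measurableSet_Ioc, integral_indicator measurableSet_Ioc]
  rfl

lemma card_lt_sub_card_lt_eq_sum {ι : Type*} [Fintype ι] (α β : ι → ℝ) (t : ℝ) :
    (((#{j | α j < t} : ℤ) - (#{j | β j < t} : ℤ) : ℤ) : ℝ) =
      ∑ j, ((if α j < t then (1 : ℝ) else 0) - if β j < t then 1 else 0) := by
  push_cast [Finset.card_filter, Finset.sum_sub_distrib]
  simp

lemma integral_deriv_mul_card_lt_sub_card_lt {ι : Type*} [Fintype ι] {φ : ℝ → ℝ}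
    (hφ : Differentiable ℝ φ) (hφ' : Continuous (deriv φ)) (α β : ι → ℝ) :
    ∫ t, deriv φ t * (((#{j | α j < t} : ℤ) - (#{j | β j < t} : ℤ) : ℤ) : ℝ) =
      ∑ j, (φ (β j) - φ (α j)) := by
  simp_rw [card_lt_sub_card_lt_eq_sum, Finset.mul_sum]
  rw [integral_finsetSum _ fun j _ =>
    integrable_mul_ite_lt_sub_ite_lt (hφ'.intervalIntegrable (α j) (β j))]
  refine Finset.sum_congr rfl fun j _ => ?_
  rw [integral_mul_ite_lt_sub_ite_lt (hφ'.intervalIntegrable _ _),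
    intervalIntegral.integral_deriv_eq_sub (fun x _ => hφ x) (hφ'.intervalIntegrable _ _)]

theorem trace_formula_finite_dim_general
    {n : ℕ} (U V : Matrix (Fin n) (Fin n) ℂ)
    (hU : U ∈ Matrix.unitaryGroup (Fin n) ℂ)
    (hV : V ∈ Matrix.unitaryGroup (Fin n) ℂ)
    (α β : Fin n → ℝ)
    (φ : ℝ → ℝ) (hφ : ContDiff ℝ 1 φ) :
    Matrix.trace (V * Matrix.diagonal (fun j => (φ (β j) : ℂ)) * star V) -
      Matrix.trace (U * Matrix.diagonal (fun j => (φ (α j) : ℂ)) * star U) =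
    ((∫ t : ℝ, deriv φ t *
        ((((Finset.univ.filter fun j => α j < t).card : ℤ) -
          ((Finset.univ.filter fun j => β j < t).card : ℤ) : ℤ) : ℝ)) : ℝ) := by
  rw [Matrix.trace_unitary_mul_diagonal_mul_star hV, Matrix.trace_unitary_mul_diagonal_mul_star hU,
    integral_deriv_mul_card_lt_sub_card_lt (hφ.differentiable one_ne_zero) hφ.continuous_deriv_one]
  push_cast [Finset.sum_sub_distrib]
  rfl

/-- **Lifshits–Krein trace formula, finite dimensions.**
Let `A, B` be `n × n` Hermitian matrices with spectral decompositions
`A = U diag(α) U*`, `B = V diag(β) V*` (`U, V` unitary, eigenvalues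
`α₁ ≤ ⋯ ≤ αₙ`, `β₁ ≤ ⋯ ≤ βₙ` counted with multiplicity), and let
`φ : ℝ → ℝ` be continuously differentiable. With
`ξ(t) = N_A(t) - N_B(t)`, where `N_A(t) = #{j : α j < t}` and
`N_B(t) = #{j : β j < t}`, and `φ(A) = U diag(φ ∘ α) U*`,
`φ(B) = V diag(φ ∘ β) V*` given by the functional calculus, one has
`Tr φ(B) - Tr φ(A) = ∫ φ'(t) ξ(t) dt`. -/
theorem trace_formula_finite_dim
    {n : ℕ} (A B U V : Matrix (Fin n) (Fin n) ℂ)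
    (hU : U ∈ Matrix.unitaryGroup (Fin n) ℂ)
    (hV : V ∈ Matrix.unitaryGroup (Fin n) ℂ)
    (α β : Fin n → ℝ) (hα : Monotone α) (hβ : Monotone β)
    (hAdecomp : A = U * Matrix.diagonal (fun j => (α j : ℂ)) * star U)
    (hBdecomp : B = V * Matrix.diagonal (fun j => (β j : ℂ)) * star V)
    (hA : A.IsHermitian) (hB : B.IsHermitian)
    (φ : ℝ → ℝ) (hφ : ContDiff ℝ 1 φ) :
    Matrix.trace (V * Matrix.diagonal (fun j => (φ (β j) : ℂ)) * star V) -
      Matrix.trace (U * Matrix.diagonal (fun j => (φ (α j) : ℂ)) * star U) =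
    ((∫ t : ℝ, deriv φ t *
        ((((Finset.univ.filter fun j => α j < t).card : ℤ) -
          ((Finset.univ.filter fun j => β j < t).card : ℤ) : ℤ) : ℝ)) : ℝ) :=
  trace_formula_finite_dim_general U V hU hV α β φ hφ
end

section
/- Let A and B be self-adjoint linear operators on a finite-dimensional complex inner product space H, and fix λ ∈ ℝ. Let P be the orthogonal projection onto the sum of the eigenspaces of A corresponding to eigenvalues strictly less than λ, and let Q be the orthogonal projection onto the sum of the eigenspaces of B corresponding to eigenvalues strictly less than λ. Then dim Ker(P − Q − I) − dim Ker(P − Q + I) = N_A(λ) − N_B(λ), where N_A(λ) and N_B(λ) denote the number of eigenvalues of A, respectively B, strictly less than λ, counted with multiplicity. -/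
/-!
If `P x - Q x = x` for orthogonal projections `P, Q` onto `U, W`, then
`re ⟪Q x, x⟫ = ‖P x‖² - ‖x‖² ≤ 0`, while `re ⟪Q x, x⟫ = ‖Q x‖² ≥ 0`; hence `P x = x` and
`Q x = 0`. So `Ker (P - Q - I) = U ⊓ Wᗮ` and, symmetrically, `Ker (P - Q + I) = W ⊓ Uᗮ`.
The index is then `dim (U ⊓ Wᗮ) - dim (W ⊓ Uᗮ) = dim U - dim W`, by the dimension formula for
`U ⊓ Wᗮ` together with `(U ⊔ Wᗮ)ᗮ = Uᗮ ⊓ W`.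
-/

open Module

namespace Submodule

variable {𝕜 E : Type*} [RCLike 𝕜] [NormedAddCommGroup E] [InnerProductSpace 𝕜 E]

theorem starProjection_sub_starProjection_eq_self_iff (U W : Submodule 𝕜 E)
    [U.HasOrthogonalProjection] [W.HasOrthogonalProjection] {x : E} :
    U.starProjection x - W.starProjection x = x ↔ x ∈ U ⊓ Wᗮ := by
  constructor
  · intro h
    have hQ : W.starProjection x = U.starProjection x - x :=
      eq_sub_of_add_eq (sub_eq_iff_eq_add'.mp h).symm
    have hre : ‖W.orthogonalProjectionOnto x‖ ^ 2 = ‖U.starProjection x‖ ^ 2 - ‖x‖ ^ 2 := by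
      rw [← re_inner_starProjection_eq_normSq, hQ, inner_sub_left, map_sub,
        re_inner_starProjection_eq_normSq, inner_self_eq_norm_sq, starProjection_apply,
        coe_norm]
    have hPx : ‖U.starProjection x‖ ≤ ‖x‖ := U.norm_starProjection_apply_le x
    have hQx : ‖W.orthogonalProjectionOnto x‖ = 0 := by
      nlinarith [norm_nonneg (W.orthogonalProjectionOnto x), norm_nonneg (U.starProjection x)]
    refine ⟨(U.mem_iff_norm_starProjection x).mpr ?_, orthogonalProjectionOnto_eq_zero_iff.mp
      (norm_eq_zero.mp hQx)⟩
    nlinarith [norm_nonneg (W.orthogonalProjectionOnto x), norm_nonneg (U.starProjection x)]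
  · rintro ⟨hxU, hxW⟩
    rw [starProjection_eq_self_iff.mpr hxU, (starProjection_apply_eq_zero_iff W).mpr hxW, sub_zero]

theorem ker_starProjection_sub_starProjection_sub_one (U W : Submodule 𝕜 E)
    [U.HasOrthogonalProjection] [W.HasOrthogonalProjection] :
    LinearMap.ker ((U.starProjection - W.starProjection - 1 : E →L[𝕜] E) : E →ₗ[𝕜] E) =
      U ⊓ Wᗮ := by
  ext x
  simp [sub_eq_zero, starProjection_sub_starProjection_eq_self_iff]

theorem ker_starProjection_sub_starProjection_add_one (U W : Submodule 𝕜 E)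
    [U.HasOrthogonalProjection] [W.HasOrthogonalProjection] :
    LinearMap.ker ((U.starProjection - W.starProjection + 1 : E →L[𝕜] E) : E →ₗ[𝕜] E) =
      W ⊓ Uᗮ := by
  have : U.starProjection - W.starProjection + 1 = -(W.starProjection - U.starProjection - 1) := by
    abel
  rw [this, ContinuousLinearMap.toLinearMap_neg, LinearMap.ker_neg,
    ker_starProjection_sub_starProjection_sub_one]

theorem finrank_inf_orthogonal_sub_finrank_inf_orthogonal [FiniteDimensional 𝕜 E]
    (U W : Submodule 𝕜 E) :
    (finrank 𝕜 ↥(U ⊓ Wᗮ) : ℤ) - finrank 𝕜 ↥(W ⊓ Uᗮ) = (finrank 𝕜 U : ℤ) - finrank 𝕜 W := by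
  have hsup_inf := finrank_sup_add_finrank_inf_eq U Wᗮ
  have hW := W.finrank_add_finrank_orthogonal
  have hsup := (U ⊔ Wᗮ).finrank_add_finrank_orthogonal
  rw [← inf_orthogonal, orthogonal_orthogonal, inf_comm] at hsup
  omega

end Submodule

open Submodule in
theorem index_of_spectral_projections_eq_counting_difference_general
    {H : Type*} [NormedAddCommGroup H] [InnerProductSpace ℂ H]
    [FiniteDimensional ℂ H]
    (SA SB : Submodule ℂ H)
    (P Q : H →L[ℂ] H)
    (hPdef : P = SA.subtypeL.comp SA.orthogonalProjectionOnto)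
    (hQdef : Q = SB.subtypeL.comp SB.orthogonalProjectionOnto) :
    (Module.finrank ℂ (LinearMap.ker ((P - Q - 1 : H →L[ℂ] H) : H →ₗ[ℂ] H)) : ℤ) -
      (Module.finrank ℂ (LinearMap.ker ((P - Q + 1 : H →L[ℂ] H) : H →ₗ[ℂ] H)) : ℤ) =
    (Module.finrank ℂ SA : ℤ) - (Module.finrank ℂ SB : ℤ) := by
  obtain rfl : P = SA.starProjection := hPdef
  obtain rfl : Q = SB.starProjection := hQdef
  rw [ker_starProjection_sub_starProjection_sub_one, ker_starProjection_sub_starProjection_add_one]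
  exact finrank_inf_orthogonal_sub_finrank_inf_orthogonal SA SB

/-- Let `A, B` be self-adjoint operators on a
finite-dimensional complex inner product space, `λ ∈ ℝ`, and let `P` (resp.
`Q`) be the orthogonal projection onto the sum of the eigenspaces of `A`
(resp. `B`) for eigenvalues strictly less than `λ`. Then
`dim Ker (P - Q - I) - dim Ker (P - Q + I) = N_A(λ) - N_B(λ)`, where `N_A(λ)`
(resp. `N_B(λ)`) is the number of eigenvalues of `A` (resp. `B`) below `λ`,
counted with multiplicity, i.e. the dimension of the corresponding sum of
eigenspaces. -/
theorem index_of_spectral_projections_eq_counting_difference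
    {H : Type*} [NormedAddCommGroup H] [InnerProductSpace ℂ H]
    [FiniteDimensional ℂ H]
    (A B : H →ₗ[ℂ] H) (hA : A.IsSymmetric) (hB : B.IsSymmetric)
    (l : ℝ)
    (SA SB : Submodule ℂ H)
    (hSA : SA = ⨆ μ : {μ : ℝ // μ < l}, Module.End.eigenspace A ((μ : ℝ) : ℂ))
    (hSB : SB = ⨆ μ : {μ : ℝ // μ < l}, Module.End.eigenspace B ((μ : ℝ) : ℂ))
    (P Q : H →L[ℂ] H)
    (hPdef : P = SA.subtypeL.comp SA.orthogonalProjectionOnto)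
    (hQdef : Q = SB.subtypeL.comp SB.orthogonalProjectionOnto) :
    (Module.finrank ℂ (LinearMap.ker ((P - Q - 1 : H →L[ℂ] H) : H →ₗ[ℂ] H)) : ℤ) -
      (Module.finrank ℂ (LinearMap.ker ((P - Q + 1 : H →L[ℂ] H) : H →ₗ[ℂ] H)) : ℤ) =
    (Module.finrank ℂ SA : ℤ) - (Module.finrank ℂ SB : ℤ) :=
  index_of_spectral_projections_eq_counting_difference_general SA SB P Q hPdef hQdef
end
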